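/- Let G ⊆ E be compact, let each T'_j be continuous with each T_i a self-map of G, let C := {x ∈ G : T_i x = x for every i with η_i > 0} be nonempty, and suppose Σ_{i∈𝕀} η_i ‖T_i x − y‖_p² < ‖x − y‖_p² for every y ∈ C and every x ∈ G \ C. Then for every x ∈ G: (a) Ψ(δ_x) = ‖x − T_1 x‖, where δ_x is the Dirac measure at x and T_1 is the blockwise map using all blocks; and (b) (1/√p̄)·inf_{z∈C}‖x − z‖ ≤ inf_{z∈C}‖x − z‖_p = d_{W2,p}(δ_x, inv𝒫), where d_{W2,p}(δ_x, inv𝒫) is the infimum of d_{W2,p}(δ_x, π) over invariant measures π ∈ 𝒫₂(G). -/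

import Mathlib

/-! Fix `y₀ ∈ C`. Integrating the paracontraction inequality against an invariant
`π ∈ 𝒫₂(G)` shows that `‖· - y₀‖_p²` is a Lyapunov function whose expected decrease vanishes,
so `π` is concentrated on the common fixed set `C`. Every coupling of `δ_x` with `π` then lives
on `{x} × C`: it is optimal, its cost is `(∫ ‖x - y‖_p² dπ)^{1/2} ≥ inf_C ‖x - ·‖_p` (with
equality for `π = δ_z`, `z ∈ C`), and the discrepancy under it is `∑ᵢ ηᵢ ‖x - Tᵢ x‖_p²`, which is
`‖x - T₁ x‖²` because block `j` is updated with total probability `p_j`. -/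

open Finset MeasureTheory Filter
open scoped RealInnerProductSpace

noncomputable section

variable {m : ℕ} {I : Type*} [Fintype I]
variable {E : Fin m → Type*} [∀ j, NormedAddCommGroup (E j)]
  [∀ j, InnerProductSpace ℝ (E j)] [∀ j, FiniteDimensional ℝ (E j)]
variable [∀ j, MeasurableSpace (E j)] [∀ j, BorelSpace (E j)]
variable [MeasurableSpace (PiLp 2 E)] [BorelSpace (PiLp 2 E)]

/-- The blockwise map `T_i`: applies `T'_j` on the blocks `j ∈ M i`, identity elsewhere. -/
def blockMap (M : I → Finset (Fin m)) (T' : ∀ j, PiLp 2 E → E j)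
    (i : I) (x : PiLp 2 E) : PiLp 2 E :=
  WithLp.toLp 2 (fun j => if j ∈ M i then T' j x else x j)

/-- The squared weighted norm `‖z‖_p²  =  ∑ⱼ pⱼ⁻¹ ‖zⱼ‖²`. -/
def wNormSq (pw : Fin m → ℝ) (z : PiLp 2 E) : ℝ :=
  ∑ j, (pw j)⁻¹ * ‖z j‖ ^ 2

/-- The weighted norm `‖z‖_p`. -/
def wNorm (pw : Fin m → ℝ) (z : PiLp 2 E) : ℝ :=
  Real.sqrt (wNormSq pw z)

/-- `γ` is a coupling of `μ` and `ν`. -/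
def IsCoupling (γ : Measure (PiLp 2 E × PiLp 2 E)) (μ ν : Measure (PiLp 2 E)) : Prop :=
  IsProbabilityMeasure γ ∧ γ.map Prod.fst = μ ∧ γ.map Prod.snd = ν

/-- The transport cost `(∫ ‖x−y‖_p² dγ)^{1/2}` of a coupling `γ`. -/
def couplingCost (pw : Fin m → ℝ) (γ : Measure (PiLp 2 E × PiLp 2 E)) : ℝ :=
  Real.sqrt (∫ z, wNormSq pw (z.1 - z.2) ∂γ)

/-- The weighted Wasserstein-2 distance `d_{W2,p}`. -/
def W2 (pw : Fin m → ℝ) (μ ν : Measure (PiLp 2 E)) : ℝ :=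
  sInf {r | ∃ γ, IsCoupling γ μ ν ∧ r = couplingCost pw γ}

/-- `γ` is an optimal coupling of `(μ, ν)` w.r.t. `d_{W2,p}`. -/
def IsOptimalCoupling (pw : Fin m → ℝ) (γ : Measure (PiLp 2 E × PiLp 2 E))
    (μ ν : Measure (PiLp 2 E)) : Prop :=
  IsCoupling γ μ ν ∧ couplingCost pw γ = W2 pw μ ν

/-- The Markov operator `μ ↦ μ𝒫 = ∑ᵢ ηᵢ (Tᵢ)_* μ`. -/
def markovOp (η : I → ℝ) (T : I → PiLp 2 E → PiLp 2 E)
    (μ : Measure (PiLp 2 E)) : Measure (PiLp 2 E) :=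
  ∑ i : I, (ENNReal.ofReal (η i)) • μ.map (T i)

/-- `μ ∈ 𝒫₂(G)` : Borel probability measure concentrated on `G` with finite second moment. -/
def MemP2 (G : Set (PiLp 2 E)) (μ : Measure (PiLp 2 E)) : Prop :=
  IsProbabilityMeasure μ ∧ μ Gᶜ = 0 ∧ Integrable (fun x => ‖x‖ ^ 2) μ

/-- `d_{W2,p}(μ, inv𝒫)` : distance from `μ` to the invariant measures in `𝒫₂(G)`. -/
def dInv (pw : Fin m → ℝ) (η : I → ℝ) (T : I → PiLp 2 E → PiLp 2 E)
    (G : Set (PiLp 2 E)) (μ : Measure (PiLp 2 E)) : ℝ :=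
  sInf {r | ∃ π, markovOp η T π = π ∧ MemP2 G π ∧ r = W2 pw μ π}

/-- The expected weighted transport discrepancy `∑ᵢ ηᵢ ψ_p(x, y, Tᵢx, Tᵢy)`. -/
def discrep (pw : Fin m → ℝ) (η : I → ℝ) (T : I → PiLp 2 E → PiLp 2 E)
    (z : PiLp 2 E × PiLp 2 E) : ℝ :=
  ∑ i : I, η i * wNormSq pw ((z.1 - T i z.1) - (z.2 - T i z.2))

/-- The invariant Markov transport discrepancy `Ψ`. -/
def Psi (pw : Fin m → ℝ) (η : I → ℝ) (T : I → PiLp 2 E → PiLp 2 E)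
    (G : Set (PiLp 2 E)) (μ : Measure (PiLp 2 E)) : ℝ :=
  sInf {r | ∃ π γ, markovOp η T π = π ∧ MemP2 G π ∧ IsOptimalCoupling pw γ μ π ∧
    r = Real.sqrt (∫ z, discrep pw η T z ∂γ)}

end

section Lyapunov

variable {X ι : Type*} [Fintype ι] [MeasurableSpace X]

theorem sum_mul_congr_of_pos {η a b : ι → ℝ} (h : ∀ i, 0 < η i → a i = b i)
    (hη : ∀ i, 0 ≤ η i) :
    ∑ i, η i * a i = ∑ i, η i * b i := by
  refine Finset.sum_congr rfl fun i _ => ?_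
  rcases (hη i).lt_or_eq with hi | hi
  · rw [h i hi]
  · rw [← hi, zero_mul, zero_mul]

theorem ae_sum_mul_comp_eq_of_invariant {π : Measure X} {η : ι → ℝ} (hη : ∀ i, 0 ≤ η i)
    {T : ι → X → X} (hT : ∀ i, Measurable (T i))
    (hπ : ∑ i, ENNReal.ofReal (η i) • π.map (T i) = π)
    {f : X → ℝ} (hf : Measurable f) (hfi : Integrable f π)
    (hfTi : ∀ i, Integrable (fun x => f (T i x)) π)
    (hle : ∀ᵐ x ∂π, ∑ i, η i * f (T i x) ≤ f x) :
    ∀ᵐ x ∂π, ∑ i, η i * f (T i x) = f x := by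
  have hsum : Integrable (fun x => ∑ i, η i * f (T i x)) π :=
    integrable_finsetSum _ fun i _ => (hfTi i).const_mul (η i)
  refine (integral_eq_iff_of_ae_le hsum hfi hle).1 ?_
  calc ∫ x, ∑ i, η i * f (T i x) ∂π = ∑ i, η i * ∫ x, f (T i x) ∂π := by
        rw [integral_finsetSum _ fun i _ => (hfTi i).const_mul (η i)]
        simp_rw [integral_const_mul]
    _ = ∫ x, f x ∂(∑ i, ENNReal.ofReal (η i) • π.map (T i)) := by
        rw [integral_finsetSum_measure fun i _ => ((integrable_map_measure
          hf.aestronglyMeasurable (hT i).aemeasurable).2 (hfTi i)).smul_measure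
          ENNReal.ofReal_ne_top]
        refine Finset.sum_congr rfl fun i _ => ?_
        rw [integral_smul_measure, integral_map (hT i).aemeasurable hf.aestronglyMeasurable,
          ENNReal.toReal_ofReal (hη i), smul_eq_mul]
    _ = ∫ x, f x ∂π := by rw [hπ]

variable [TopologicalSpace X] [BorelSpace X] [T2Space X]

theorem integrable_of_continuousOn_of_ae_mem {G : Set X} (hG : IsCompact G) {π : Measure X}
    [IsFiniteMeasure π] (hπG : ∀ᵐ x ∂π, x ∈ G) {f : X → ℝ} (hf : ContinuousOn f G) :
    Integrable f π := by
  simpa only [IntegrableOn, Measure.restrict_eq_self_of_ae_mem hπG] using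
    hf.integrableOn_compact (μ := π) hG

theorem ae_mem_of_invariant_of_lyapunov {G C : Set X} (hG : IsCompact G) {π : Measure X}
    [IsFiniteMeasure π] (hπG : ∀ᵐ x ∂π, x ∈ G) {η : ι → ℝ} (hη : ∀ i, 0 ≤ η i)
    {T : ι → X → X} (hT : ∀ i, Continuous (T i))
    (hπ : ∑ i, ENNReal.ofReal (η i) • π.map (T i) = π)
    {f : X → ℝ} (hf : Continuous f) (heq : ∀ x ∈ C, ∑ i, η i * f (T i x) = f x)
    (hlt : ∀ x ∈ G \ C, ∑ i, η i * f (T i x) < f x) :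
    ∀ᵐ x ∂π, x ∈ C := by
  have hle : ∀ᵐ x ∂π, ∑ i, η i * f (T i x) ≤ f x := by
    filter_upwards [hπG] with x hx
    by_cases hxC : x ∈ C
    · exact (heq x hxC).le
    · exact (hlt x ⟨hx, hxC⟩).le
  have hae := ae_sum_mul_comp_eq_of_invariant hη (fun i => (hT i).measurable) hπ hf.measurable
    (integrable_of_continuousOn_of_ae_mem hG hπG hf.continuousOn)
    (fun i => integrable_of_continuousOn_of_ae_mem hG hπG (hf.comp (hT i)).continuousOn) hle
  filter_upwards [hπG, hae] with x hxG hx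
  by_contra hxC
  exact (hlt x ⟨hxG, hxC⟩).ne hx

end Lyapunov

section BlockMaps

variable {m : ℕ} {E : Fin m → Type*} [∀ j, NormedAddCommGroup (E j)] {I : Type*}

theorem continuous_blockMap (M : I → Finset (Fin m)) {T' : ∀ j, PiLp 2 E → E j}
    (hcont : ∀ j, Continuous (T' j)) (i : I) : Continuous (blockMap M T' i) := by
  refine (PiLp.continuous_toLp 2 E).comp (continuous_pi fun j => ?_)
  split_ifs
  · exact hcont j
  · exact PiLp.continuous_apply 2 E j

theorem continuous_wNormSq (pw : Fin m → ℝ) : Continuous (wNormSq (E := E) pw) :=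
  continuous_finsetSum _ fun j _ =>
    continuous_const.mul ((PiLp.continuous_apply 2 E j).norm.pow 2)

theorem wNormSq_nonneg {pw : Fin m → ℝ} (hp : ∀ j, 0 < pw j) (z : PiLp 2 E) :
    0 ≤ wNormSq pw z :=
  Finset.sum_nonneg fun j _ => mul_nonneg (inv_nonneg.2 (hp j).le) (sq_nonneg _)

theorem norm_le_sqrt_mul_wNorm {pw : Fin m → ℝ} (hp : ∀ j, 0 < pw j) {pbar : ℝ}
    (hpbar : ∀ j, pw j ≤ pbar) (z : PiLp 2 E) : ‖z‖ ≤ √pbar * wNorm pw z := by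
  rw [wNorm, ← Real.sqrt_mul' _ (wNormSq_nonneg hp z), ← Real.sqrt_sq (norm_nonneg z)]
  refine Real.sqrt_le_sqrt ?_
  rw [PiLp.norm_sq_eq_of_L2, wNormSq, Finset.mul_sum]
  refine Finset.sum_le_sum fun j _ => ?_
  rw [← mul_assoc]
  refine le_mul_of_one_le_left (sq_nonneg _) ?_
  rw [← div_eq_mul_inv]
  exact (one_le_div (hp j)).2 (hpbar j)

theorem wNormSq_sub_blockMap (M : I → Finset (Fin m)) (T' : ∀ j, PiLp 2 E → E j)
    (pw : Fin m → ℝ) (i : I) (x : PiLp 2 E) :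
    wNormSq pw (x - blockMap M T' i x) =
      ∑ j, if j ∈ M i then (pw j)⁻¹ * ‖x j - T' j x‖ ^ 2 else 0 := by
  refine Finset.sum_congr rfl fun j _ => ?_
  by_cases h : j ∈ M i <;> simp [blockMap, h]

theorem norm_sq_sub_blockMap_of_eq_univ (M : I → Finset (Fin m)) (T' : ∀ j, PiLp 2 E → E j)
    {i : I} (hi : M i = Finset.univ) (x : PiLp 2 E) :
    ‖x - blockMap M T' i x‖ ^ 2 = ∑ j, ‖x j - T' j x‖ ^ 2 := by
  simp [PiLp.norm_sq_eq_of_L2, blockMap, hi]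

theorem sum_mul_wNormSq_sub_blockMap [Fintype I] (M : I → Finset (Fin m))
    (T' : ∀ j, PiLp 2 E → E j) {i₁ : I} (hi₁ : M i₁ = Finset.univ) (η : I → ℝ)
    {pw : Fin m → ℝ} (hpw : ∀ j, pw j = ∑ i, if j ∈ M i then η i else 0)
    (hp : ∀ j, 0 < pw j) (x : PiLp 2 E) :
    ∑ i, η i * wNormSq pw (x - blockMap M T' i x) = ‖x - blockMap M T' i₁ x‖ ^ 2 := by
  simp_rw [wNormSq_sub_blockMap, Finset.mul_sum, mul_ite, mul_zero]
  rw [Finset.sum_comm, norm_sq_sub_blockMap_of_eq_univ M T' hi₁]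
  refine Finset.sum_congr rfl fun j _ => ?_
  simp_rw [← ite_zero_mul, ← mul_assoc, ← Finset.sum_mul, ← hpw, mul_inv_cancel₀ (hp j).ne',
    one_mul]

end BlockMaps

section Couplings

variable {m : ℕ} {E : Fin m → Type*} [MeasurableSpace (PiLp 2 E)]

theorem IsCoupling.ae_fst {γ : Measure (PiLp 2 E × PiLp 2 E)} {μ ν : Measure (PiLp 2 E)}
    (hγ : IsCoupling γ μ ν) {p : PiLp 2 E → Prop} (h : ∀ᵐ x ∂μ, p x) : ∀ᵐ z ∂γ, p z.1 :=
  ae_of_ae_map measurable_fst.aemeasurable (hγ.2.1 ▸ h)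

theorem IsCoupling.ae_snd {γ : Measure (PiLp 2 E × PiLp 2 E)} {μ ν : Measure (PiLp 2 E)}
    (hγ : IsCoupling γ μ ν) {p : PiLp 2 E → Prop} (h : ∀ᵐ y ∂ν, p y) : ∀ᵐ z ∂γ, p z.2 :=
  ae_of_ae_map measurable_snd.aemeasurable (hγ.2.2 ▸ h)

theorem isCoupling_prod (μ ν : Measure (PiLp 2 E)) [IsProbabilityMeasure μ]
    [IsProbabilityMeasure ν] : IsCoupling (μ.prod ν) μ ν :=
  ⟨inferInstance, by simp, by simp⟩

theorem markovOp_dirac_of_fixed {I : Type*} [Fintype I] {η : I → ℝ} (hη : ∀ i, 0 ≤ η i)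
    (hηsum : ∑ i, η i = 1) {T : I → PiLp 2 E → PiLp 2 E} (hT : ∀ i, Measurable (T i))
    {z : PiLp 2 E} (hz : ∀ i, 0 < η i → T i z = z) :
    markovOp η T (Measure.dirac z) = Measure.dirac z := by
  have hterm : ∀ i, ENNReal.ofReal (η i) • (Measure.dirac z).map (T i)
      = ENNReal.ofReal (η i) • Measure.dirac z := by
    intro i
    rcases (hη i).lt_or_eq with hi | hi
    · rw [Measure.map_dirac' (hT i), hz i hi]
    · rw [← hi, ENNReal.ofReal_zero, zero_smul, zero_smul]
  rw [markovOp, Finset.sum_congr rfl fun i _ => hterm i, ← Finset.sum_smul,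
    ← ENNReal.ofReal_sum_of_nonneg fun i _ => hη i, hηsum, ENNReal.ofReal_one, one_smul]

variable [∀ j, NormedAddCommGroup (E j)]

theorem W2_nonneg (pw : Fin m → ℝ) (μ ν : Measure (PiLp 2 E)) : 0 ≤ W2 pw μ ν :=
  Real.sInf_nonneg fun _ ⟨_, _, hr⟩ => hr ▸ Real.sqrt_nonneg _

theorem MemP2.ae_mem {G : Set (PiLp 2 E)} {π : Measure (PiLp 2 E)} (h : MemP2 G π) :
    ∀ᵐ x ∂π, x ∈ G :=
  ae_iff.2 h.2.1

variable [BorelSpace (PiLp 2 E)]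

theorem ae_dirac_eq_self (x : PiLp 2 E) : ∀ᵐ y ∂(Measure.dirac x), y = x := by
  rw [ae_dirac_eq]
  exact Filter.eventually_pure.2 rfl

theorem IsCoupling.couplingCost_of_dirac_left (pw : Fin m → ℝ)
    {γ : Measure (PiLp 2 E × PiLp 2 E)} {x : PiLp 2 E} {ν : Measure (PiLp 2 E)}
    (hγ : IsCoupling γ (Measure.dirac x) ν) :
    couplingCost pw γ = √(∫ y, wNormSq pw (x - y) ∂ν) := by
  have hcont : Continuous fun y : PiLp 2 E => wNormSq pw (x - y) :=
    (continuous_wNormSq pw).comp (continuous_sub_left x)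
  rw [couplingCost, integral_congr_ae (g := fun z => wNormSq pw (x - z.2)), ← hγ.2.2,
    integral_map measurable_snd.aemeasurable hcont.aestronglyMeasurable]
  filter_upwards [hγ.ae_fst (ae_dirac_eq_self x)] with z hz
  rw [hz]

theorem W2_dirac_left (pw : Fin m → ℝ) (x : PiLp 2 E) (ν : Measure (PiLp 2 E))
    [IsProbabilityMeasure ν] : W2 pw (Measure.dirac x) ν = √(∫ y, wNormSq pw (x - y) ∂ν) := by
  have hne : {r | ∃ γ, IsCoupling γ (Measure.dirac x) ν ∧ r = couplingCost pw γ}.Nonempty :=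
    ⟨_, _, isCoupling_prod _ ν, rfl⟩
  rw [W2, hne.subset_singleton_iff.1 ?_, csInf_singleton]
  rintro _ ⟨γ, hγ, rfl⟩
  exact hγ.couplingCost_of_dirac_left pw

theorem IsCoupling.isOptimalCoupling_of_dirac_left (pw : Fin m → ℝ)
    {γ : Measure (PiLp 2 E × PiLp 2 E)} {x : PiLp 2 E} {ν : Measure (PiLp 2 E)}
    [IsProbabilityMeasure ν] (hγ : IsCoupling γ (Measure.dirac x) ν) :
    IsOptimalCoupling pw γ (Measure.dirac x) ν :=
  ⟨hγ, by rw [hγ.couplingCost_of_dirac_left, W2_dirac_left]⟩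

theorem W2_dirac_dirac (pw : Fin m → ℝ) (x z : PiLp 2 E) :
    W2 pw (Measure.dirac x) (Measure.dirac z) = wNorm pw (x - z) := by
  rw [W2_dirac_left, integral_dirac, wNorm]

theorem memP2_dirac {G : Set (PiLp 2 E)} {z : PiLp 2 E} (hz : z ∈ G) :
    MemP2 G (Measure.dirac z) :=
  ⟨inferInstance, by simp [hz], integrable_dirac enorm_lt_top⟩

end Couplings

section InvariantMeasures

variable {m : ℕ} {E : Fin m → Type*} [∀ j, NormedAddCommGroup (E j)]
  [MeasurableSpace (PiLp 2 E)] [BorelSpace (PiLp 2 E)]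
  {I : Type*} [Fintype I] {η : I → ℝ} {T : I → PiLp 2 E → PiLp 2 E} {G C : Set (PiLp 2 E)}

theorem Psi_dirac_eq (pw : Fin m → ℝ) (hη : ∀ i, 0 ≤ η i)
    (hfix : ∀ y ∈ C, ∀ i, 0 < η i → T i y = y)
    (hconc : ∀ π, markovOp η T π = π → MemP2 G π → ∀ᵐ y ∂π, y ∈ C)
    (hne : ∃ π, markovOp η T π = π ∧ MemP2 G π) (x : PiLp 2 E) :
    Psi pw η T G (Measure.dirac x) = √(∑ i, η i * wNormSq pw (x - T i x)) := by
  have hval : ∀ π γ, markovOp η T π = π → MemP2 G π →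
      IsOptimalCoupling pw γ (Measure.dirac x) π →
      √(∫ z, discrep pw η T z ∂γ) = √(∑ i, η i * wNormSq pw (x - T i x)) := by
    intro π γ hπ hπG hγ
    have := hγ.1.1
    rw [integral_congr_ae (g := fun _ => ∑ i, η i * wNormSq pw (x - T i x)), integral_const,
      probReal_univ, one_smul]
    filter_upwards [hγ.1.ae_fst (ae_dirac_eq_self x), hγ.1.ae_snd (hconc π hπ hπG)]
      with z hz₁ hz₂
    rw [discrep, hz₁]
    exact sum_mul_congr_of_pos (fun i hi => by rw [hfix _ hz₂ i hi, sub_self, sub_zero]) hη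
  obtain ⟨π₀, hπ₀, hπ₀G⟩ := hne
  have := hπ₀G.1
  have hS : {r | ∃ π γ, markovOp η T π = π ∧ MemP2 G π ∧
      IsOptimalCoupling pw γ (Measure.dirac x) π ∧ r = √(∫ z, discrep pw η T z ∂γ)}.Nonempty :=
    ⟨_, π₀, _, hπ₀, hπ₀G, (isCoupling_prod _ π₀).isOptimalCoupling_of_dirac_left pw, rfl⟩
  rw [Psi, hS.subset_singleton_iff.1 ?_, csInf_singleton]
  rintro _ ⟨π, γ, hπ, hπG, hγ, rfl⟩
  exact hval π γ hπ hπG hγ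

theorem dInv_dirac_eq {pw : Fin m → ℝ} (hp : ∀ j, 0 < pw j) (hG : IsCompact G)
    (hCne : C.Nonempty)
    (hdirac : ∀ z ∈ C, markovOp η T (Measure.dirac z) = Measure.dirac z ∧
      MemP2 G (Measure.dirac z))
    (hconc : ∀ π, markovOp η T π = π → MemP2 G π → ∀ᵐ y ∂π, y ∈ C) (x : PiLp 2 E) :
    dInv pw η T G (Measure.dirac x) = sInf ((fun z => wNorm pw (x - z)) '' C) := by
  set c := sInf ((fun z => wNorm pw (x - z)) '' C)
  have hc0 : 0 ≤ c := Real.sInf_nonneg fun _ ⟨_, _, hr⟩ => hr ▸ Real.sqrt_nonneg _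
  have hcle : ∀ z ∈ C, c ≤ wNorm pw (x - z) := fun z hz =>
    csInf_le ⟨0, fun _ ⟨_, _, hr⟩ => hr ▸ Real.sqrt_nonneg _⟩ ⟨z, hz, rfl⟩
  obtain ⟨z₀, hz₀⟩ := hCne
  refine le_antisymm ?_ (le_csInf ⟨_, _, (hdirac z₀ hz₀).1, (hdirac z₀ hz₀).2, rfl⟩ ?_)
  · refine le_csInf ⟨_, z₀, hz₀, rfl⟩ ?_
    rintro _ ⟨z, hz, rfl⟩
    have hbdd : BddBelow {r | ∃ π, markovOp η T π = π ∧ MemP2 G π ∧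
        r = W2 pw (Measure.dirac x) π} :=
      ⟨0, fun _ ⟨_, _, _, hr⟩ => hr ▸ W2_nonneg _ _ _⟩
    exact (csInf_le hbdd ⟨_, (hdirac z hz).1, (hdirac z hz).2, rfl⟩).trans_eq
      (W2_dirac_dirac pw x z)
  · rintro _ ⟨π, hπ, hπG, rfl⟩
    have := hπG.1
    have hint : Integrable (fun y => wNormSq pw (x - y)) π :=
      integrable_of_continuousOn_of_ae_mem hG hπG.ae_mem
        ((continuous_wNormSq pw).comp (continuous_sub_left x)).continuousOn
    rw [W2_dirac_left, ← Real.sqrt_sq hc0]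
    refine Real.sqrt_le_sqrt ?_
    calc c ^ 2 = ∫ _, c ^ 2 ∂π := by simp
      _ ≤ ∫ y, wNormSq pw (x - y) ∂π := by
        refine integral_mono_ae (integrable_const _) hint ?_
        filter_upwards [hconc π hπ hπG] with y hy
        rw [← Real.sq_sqrt (wNormSq_nonneg hp (x - y))]
        exact pow_le_pow_left₀ hc0 (hcle y hy) 2

end InvariantMeasures

theorem one_div_sqrt_mul_sInf_norm_le_sInf_wNorm {m : ℕ} {E : Fin m → Type*}
    [∀ j, NormedAddCommGroup (E j)]
    {pw : Fin m → ℝ} (hp : ∀ j, 0 < pw j) {pbar : ℝ} (hpbar : ∀ j, pw j ≤ pbar)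
    {C : Set (PiLp 2 E)} (hC : C.Nonempty) (x : PiLp 2 E) :
    (1 / √pbar) * sInf ((fun z => ‖x - z‖) '' C) ≤ sInf ((fun z => wNorm pw (x - z)) '' C) := by
  refine le_csInf (hC.image _) ?_
  rintro _ ⟨z, hz, rfl⟩
  rw [one_div_mul_eq_div]
  refine div_le_of_le_mul₀ (Real.sqrt_nonneg _) (Real.sqrt_nonneg _) ?_
  calc sInf ((fun z => ‖x - z‖) '' C) ≤ ‖x - z‖ :=
        csInf_le ⟨0, fun _ ⟨_, _, hr⟩ => hr ▸ norm_nonneg _⟩ ⟨z, hz, rfl⟩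
    _ ≤ wNorm pw (x - z) * √pbar := (norm_le_sqrt_mul_wNorm hp hpbar _).trans_eq (mul_comm _ _)

variable {m : ℕ} {I : Type*} [Fintype I]
variable {E : Fin m → Type*} [∀ j, NormedAddCommGroup (E j)]
  [∀ j, InnerProductSpace ℝ (E j)] [∀ j, FiniteDimensional ℝ (E j)]
variable [∀ j, MeasurableSpace (E j)] [∀ j, BorelSpace (E j)]
variable [MeasurableSpace (PiLp 2 E)] [BorelSpace (PiLp 2 E)]

theorem statement8_general
    (M : I → Finset (Fin m))
    (i₁ : I) (hi₁ : M i₁ = Finset.univ)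
    (η : I → ℝ) (hη : ∀ i, 0 ≤ η i) (hηsum : ∑ i : I, η i = 1)
    (pw : Fin m → ℝ) (hpw : ∀ j, pw j = ∑ i : I, if j ∈ M i then η i else 0)
    (hp : ∀ j, 0 < pw j)
    (pbar : ℝ) (hpbar : IsGreatest (Set.range pw) pbar)
    (T' : ∀ j, PiLp 2 E → E j) (hcont : ∀ j, Continuous (T' j))
    (G : Set (PiLp 2 E)) (hG : IsCompact G)
    (C : Set (PiLp 2 E))
    (hC : C = {x ∈ G | ∀ i, 0 < η i → blockMap M T' i x = x})
    (hCne : C.Nonempty)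
    (hpara : ∀ y ∈ C, ∀ x ∈ G \ C,
      ∑ i : I, η i * wNormSq pw (blockMap M T' i x - y) < wNormSq pw (x - y)) :
    ∀ x ∈ G,
      Psi pw η (blockMap M T') G (Measure.dirac x) = ‖x - blockMap M T' i₁ x‖
      ∧ (1 / Real.sqrt pbar) * sInf ((fun z => ‖x - z‖) '' C)
          ≤ sInf ((fun z => wNorm pw (x - z)) '' C)
      ∧ sInf ((fun z => wNorm pw (x - z)) '' C)
          = dInv pw η (blockMap M T') G (Measure.dirac x) := by
  have hT : ∀ i, Continuous (blockMap M T' i) := continuous_blockMap M hcont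
  have hfix : ∀ z ∈ C, ∀ i, 0 < η i → blockMap M T' i z = z := by
    rw [hC]
    exact fun z hz => hz.2
  have hdirac : ∀ z ∈ C, markovOp η (blockMap M T') (Measure.dirac z) = Measure.dirac z ∧
      MemP2 G (Measure.dirac z) := fun z hz =>
    ⟨markovOp_dirac_of_fixed hη hηsum (fun i => (hT i).measurable) (hfix z hz),
      memP2_dirac (by rw [hC] at hz; exact hz.1)⟩
  obtain ⟨y₀, hy₀⟩ := hCne
  have hconc : ∀ π, markovOp η (blockMap M T') π = π → MemP2 G π → ∀ᵐ y ∂π, y ∈ C := by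
    intro π hπ hπG
    have := hπG.1
    refine ae_mem_of_invariant_of_lyapunov hG hπG.ae_mem hη hT hπ
      ((continuous_wNormSq pw).comp (continuous_sub_right y₀)) (fun z hz => ?_) (hpara y₀ hy₀)
    rw [sum_mul_congr_of_pos (fun i hi => by rw [hfix z hz i hi]) hη, ← Finset.sum_mul, hηsum,
      one_mul]
  intro x _
  refine ⟨?_,
    one_div_sqrt_mul_sInf_norm_le_sInf_wNorm hp (fun j => hpbar.2 ⟨j, rfl⟩) ⟨y₀, hy₀⟩ x,
    (dInv_dirac_eq hp hG ⟨y₀, hy₀⟩ hdirac hconc x).symm⟩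
  rw [Psi_dirac_eq pw hη hfix hconc ⟨_, hdirac y₀ hy₀⟩,
    sum_mul_wNormSq_sub_blockMap M T' hi₁ η hpw hp, Real.sqrt_sq (norm_nonneg _)]

/-- pointwise formulas for the invariant Markov transport discrepancy and the
distance to the invariant measures in the consistent paracontractive case. -/
theorem statement8
    (M : I → Finset (Fin m)) (hM : ∀ i, (M i).Nonempty)
    (i₁ : I) (hi₁ : M i₁ = Finset.univ)
    (η : I → ℝ) (hη : ∀ i, 0 ≤ η i) (hηsum : ∑ i : I, η i = 1)
    (pw : Fin m → ℝ) (hpw : ∀ j, pw j = ∑ i : I, if j ∈ M i then η i else 0)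
    (hp : ∀ j, 0 < pw j)
    (pbar : ℝ) (hpbar : IsGreatest (Set.range pw) pbar)
    (T' : ∀ j, PiLp 2 E → E j) (hcont : ∀ j, Continuous (T' j))
    (G : Set (PiLp 2 E)) (hG : IsCompact G)
    (hself : ∀ i, Set.MapsTo (blockMap M T' i) G G)
    (C : Set (PiLp 2 E))
    (hC : C = {x ∈ G | ∀ i, 0 < η i → blockMap M T' i x = x})
    (hCne : C.Nonempty)
    (hpara : ∀ y ∈ C, ∀ x ∈ G \ C,
      ∑ i : I, η i * wNormSq pw (blockMap M T' i x - y) < wNormSq pw (x - y)) :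
    ∀ x ∈ G,
      Psi pw η (blockMap M T') G (Measure.dirac x) = ‖x - blockMap M T' i₁ x‖
      ∧ (1 / Real.sqrt pbar) * sInf ((fun z => ‖x - z‖) '' C)
          ≤ sInf ((fun z => wNorm pw (x - z)) '' C)
      ∧ sInf ((fun z => wNorm pw (x - z)) '' C)
          = dInv pw η (blockMap M T') G (Measure.dirac x) :=
  statement8_general M i₁ hi₁ η hη hηsum pw hpw hp pbar hpbar T' hcont G hG C hC hCne hpara
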